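/- arXiv:2203.04253 — 2 statements merged into one kernel-verified Lean document; each statement's English description precedes it below -/
import Mathlib

section
/- For every positive integer m, in every strong orientation of the triangulated nested triangles graph G_{3m}, the directed distance from w_1 to v_m plus the directed distance from v_m to w_1 is at least 2m; consequently at least one of these two directed distances is at least m. -/
def IsOrientation {V : Type*} (G : SimpleGraph V) (D : V → V → Prop) : Prop :=
  (∀ u v, D u v → G.Adj u v) ∧ ∀ u v, G.Adj u v → (D u v ↔ ¬ D v u)

/-- `f : Fin (k+1) → V` is a directed walk of length `k` from `u` to `v` in the digraph `D`. -/
def IsDiwalk {V : Type*} (D : V → V → Prop) {k : ℕ} (f : Fin (k + 1) → V) (u v : V) : Prop :=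
  f 0 = u ∧ f (Fin.last k) = v ∧ ∀ i : Fin k, D (f i.castSucc) (f i.succ)

/-- A digraph is strong if every vertex is reachable from every other vertex. -/
def IsStrong {V : Type*} (D : V → V → Prop) : Prop :=
  ∀ u v : V, ∃ (k : ℕ) (f : Fin (k + 1) → V), IsDiwalk D f u v

/-- Directed distance: the length of a shortest directed walk from `u` to `v`. -/
noncomputable def dirDist {V : Type*} (D : V → V → Prop) (u v : V) : ℕ :=
  sInf {k | ∃ f : Fin (k + 1) → V, IsDiwalk D f u v}

/-- Diameter of a digraph: maximum directed distance over ordered pairs of distinct vertices. -/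
noncomputable def dirDiam {V : Type*} (D : V → V → Prop) : ℕ :=
  sSup {d | ∃ u v : V, u ≠ v ∧ d = dirDist D u v}

/-- The triangulated nested triangles graph `G_{3m}` on vertex set `Fin m × Fin 3`, where
`(i, 0) = u_{i+1}`, `(i, 1) = v_{i+1}`, `(i, 2) = w_{i+1}`.  Its edges are the triangle
edges, the connector edges, and the diagonal edges `(v_i, w_{i+1})`, `(v_i, u_{i+1})`,
`(w_i, u_{i+1})`. -/
def nestedTriangles (m : ℕ) : SimpleGraph (Fin m × Fin 3) :=
  SimpleGraph.fromEdgeSet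
    {e | (∃ (i : Fin m) (x y : Fin 3), x ≠ y ∧ e = s((i, x), (i, y))) ∨
         (∃ i j : Fin m, (j : ℕ) = (i : ℕ) + 1 ∧
           ((∃ x : Fin 3, e = s((i, x), (j, x))) ∨
             e = s((i, 1), (j, 2)) ∨ e = s((i, 1), (j, 0)) ∨ e = s((i, 2), (j, 0))))}


def phiNT (m : ℕ) (p : Fin m × Fin 3) : ℤ :=
  (p.1 : ℤ) + (if p.2 = 1 then 1 else 0)

lemma phiNT_adj {m : ℕ} {u v : Fin m × Fin 3} (h : (nestedTriangles m).Adj u v) :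
    (phiNT m u - phiNT m v).natAbs ≤ 1 := by
  obtain ⟨u1, u2⟩ := u
  obtain ⟨v1, v2⟩ := v
  rw [nestedTriangles, SimpleGraph.fromEdgeSet_adj] at h
  obtain ⟨hmem, hne⟩ := h
  simp only [Set.mem_setOf_eq, Sym2.eq, Sym2.rel_iff', Prod.mk.injEq, Prod.swap_prod_mk] at hmem
  rcases hmem with ⟨i, x, y, hxy, ⟨⟨h1, h2⟩, h3, h4⟩ | ⟨⟨h1, h2⟩, h3, h4⟩⟩ |
    ⟨i, j, hij, ⟨x, ⟨⟨h1, h2⟩, h3, h4⟩ | ⟨⟨h1, h2⟩, h3, h4⟩⟩ |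
      (⟨⟨h1, h2⟩, h3, h4⟩ | ⟨⟨h1, h2⟩, h3, h4⟩) |
      (⟨⟨h1, h2⟩, h3, h4⟩ | ⟨⟨h1, h2⟩, h3, h4⟩) |
      (⟨⟨h1, h2⟩, h3, h4⟩ | ⟨⟨h1, h2⟩, h3, h4⟩)⟩ <;>
    subst h1 <;> subst h2 <;> subst h3 <;> subst h4 <;>
    simp only [phiNT] <;>
    first
      | (fin_cases x <;> first | (fin_cases y <;> simp <;> omega) | (simp <;> omega))
      | (simp <;> omega)

lemma diwalk_phi_bound {m : ℕ} {D : (Fin m × Fin 3) → (Fin m × Fin 3) → Prop}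
    (hD1 : ∀ u v, D u v → (nestedTriangles m).Adj u v)
    {k : ℕ} {f : Fin (k + 1) → Fin m × Fin 3} {u v : Fin m × Fin 3}
    (hw : IsDiwalk D f u v) : (phiNT m u - phiNT m v).natAbs ≤ k := by
  obtain ⟨h0, hl, hstep⟩ := hw
  have key : ∀ n, (hn : n ≤ k) →
      (phiNT m (f ⟨n, Nat.lt_succ_of_le hn⟩) - phiNT m (f 0)).natAbs ≤ n := by
    intro n
    induction n with
    | zero =>
      intro _
      simp
    | succ n ih =>
      intro hn
      have hnk : n < k := hn
      have h1 := ih (Nat.le_of_lt hnk)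
      have h3 := phiNT_adj (hD1 _ _ (hstep ⟨n, hnk⟩))
      have e1 : (⟨n, hnk⟩ : Fin k).castSucc = (⟨n, Nat.lt_succ_of_le (Nat.le_of_lt hnk)⟩ : Fin (k+1)) := rfl
      have e2 : (⟨n, hnk⟩ : Fin k).succ = (⟨n + 1, Nat.lt_succ_of_le hn⟩ : Fin (k+1)) := rfl
      rw [e1, e2] at h3
      omega
  have hlast : (Fin.last k) = (⟨k, Nat.lt_succ_of_le le_rfl⟩ : Fin (k+1)) := rfl
  have := key k le_rfl
  rw [← hlast, hl, h0] at this
  omega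

lemma dirDist_ge {m : ℕ} (hm : 0 < m) {D : (Fin m × Fin 3) → (Fin m × Fin 3) → Prop}
    (hD1 : ∀ u v, D u v → (nestedTriangles m).Adj u v) (hstrong : IsStrong D)
    {u v : Fin m × Fin 3} (huv : (phiNT m u - phiNT m v).natAbs = m) :
    m ≤ dirDist D u v := by
  obtain ⟨k, f, hw⟩ := hstrong u v
  refine le_csInf ⟨k, f, hw⟩ ?_
  rintro b ⟨g, hg⟩
  have := diwalk_phi_bound hD1 hg
  omega

/-- For every positive integer `m`, in every strong orientation of the triangulated nested
triangles graph `G_{3m}`, the directed distance from `w_1` to `v_m` plus the directed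
distance from `v_m` to `w_1` is at least `2m`; consequently one of the two distances is
at least `m`. -/
theorem nestedTriangles_dirDist_sum_ge (m : ℕ) (hm : 0 < m)
    (D : (Fin m × Fin 3) → (Fin m × Fin 3) → Prop)
    (hD : IsOrientation (nestedTriangles m) D) (hstrong : IsStrong D) :
    2 * m ≤ dirDist D (⟨0, hm⟩, 2) (⟨m - 1, by omega⟩, 1)
          + dirDist D (⟨m - 1, by omega⟩, 1) (⟨0, hm⟩, 2) ∧
      (m ≤ dirDist D (⟨0, hm⟩, 2) (⟨m - 1, by omega⟩, 1) ∨
        m ≤ dirDist D (⟨m - 1, by omega⟩, 1) (⟨0, hm⟩, 2)) := by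
  have hb1 : m ≤ dirDist D (⟨0, hm⟩, 2) (⟨m - 1, by omega⟩, 1) := by
    apply dirDist_ge hm hD.1 hstrong
    simp [phiNT]
    omega
  have hb2 : m ≤ dirDist D (⟨m - 1, by omega⟩, 1) (⟨0, hm⟩, 2) := by
    apply dirDist_ge hm hD.1 hstrong
    simp [phiNT]
    omega
  exact ⟨by omega, Or.inl hb1⟩
end

section
/- Let a_1,…,a_n be positive integers that can be partitioned into two subsets with equal sums, let G be the weighted graph G(a_1,…,a_n), and let D = 1 + (1/2)·Σ_{i=1}^n a_i − ε, where ε = 1/m and m is the number of edges of G. Then G admits a strong orientation whose weighted diameter is at most D. -/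
/-- Vertices of the gadget graph `G(a₁,…,aₙ)`: top-row vertices `v i` and bottom-row
vertices `w i` for the columns `i = 0, …, n`, the subdivision vertices `s` and `t`, and the
inner-cycle vertices `d j`, `d' j` replacing the internal vertical edge at column `j + 1`
(for `j : Fin (n - 1)`). -/
inductive GV (n : ℕ) : Type
  | v (i : Fin (n + 1))
  | w (i : Fin (n + 1))
  | s
  | t
  | d (j : Fin (n - 1))
  | d' (j : Fin (n - 1))

/-- The internal column corresponding to the index `j : Fin (n - 1)` is column `j + 1`. -/
def GV.col {n : ℕ} (j : Fin (n - 1)) : Fin (n + 1) :=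
  ⟨(j : ℕ) + 1, by have := j.isLt; omega⟩

/-- The edges of the gadget graph `G(a₁,…,aₙ)`: the top edges `(v i, v (i+1))`, the bottom
edges `(w i, w (i+1))`, the subdivided left and right vertical edges through `s` resp. `t`,
and for each internal column the 4-cycle `v, d, w, d'`. -/
def gridEdges (n : ℕ) : Set (Sym2 (GV n)) :=
  {e | (∃ i : Fin n, e = s(GV.v i.castSucc, GV.v i.succ)) ∨
       (∃ i : Fin n, e = s(GV.w i.castSucc, GV.w i.succ)) ∨
       e = s(GV.s, GV.v 0) ∨ e = s(GV.s, GV.w 0) ∨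
       e = s(GV.t, GV.v (Fin.last n)) ∨ e = s(GV.t, GV.w (Fin.last n)) ∨
       (∃ j : Fin (n - 1),
         e = s(GV.d j, GV.v (GV.col j)) ∨ e = s(GV.d j, GV.w (GV.col j)) ∨
         e = s(GV.d' j, GV.v (GV.col j)) ∨ e = s(GV.d' j, GV.w (GV.col j)))}

/-- The gadget graph `G(a₁,…,aₙ)` (as an unweighted simple graph). -/
def gridGraph (n : ℕ) : SimpleGraph (GV n) := SimpleGraph.fromEdgeSet (gridEdges n)

/-- The edge weights of `G(a₁,…,aₙ)`: the top edge `(v i, v (i+1))` gets weight `aᵢ`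
(indexed so that `min i (i+1) = i`), and every other edge gets weight `ε`. -/
noncomputable def gridWt (n : ℕ) (a : Fin n → ℕ) (ε : ℝ) : GV n → GV n → ℝ
  | GV.v i, GV.v j =>
      if h : min (i : ℕ) (j : ℕ) < n then (a ⟨min (i : ℕ) (j : ℕ), h⟩ : ℝ) else ε
  | _, _ => ε

/-- Weighted directed distance: the least total weight of a directed walk from `u` to `v`. -/
noncomputable def wDirDist {V : Type*} (D : V → V → Prop) (wt : V → V → ℝ) (u v : V) : ℝ :=
  sInf {x | ∃ (k : ℕ) (f : Fin (k + 1) → V), IsDiwalk D f u v ∧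
    x = ∑ i : Fin k, wt (f i.castSucc) (f i.succ)}

/-- Weighted diameter of an orientation: the maximum weighted directed distance over
ordered pairs of distinct vertices. -/
noncomputable def wDirDiam {V : Type*} (D : V → V → Prop) (wt : V → V → ℝ) : ℝ :=
  sSup {x | ∃ u v : V, u ≠ v ∧ x = wDirDist D wt u v}


/-!
Orient the top edge of cut `c` to the right iff `c ∈ S` and the bottom edge of that cut the other
way, so that every cut is crossed rightwards on exactly one row; make every inner 4-cycle a
directed cycle, and orient the paths through `s` and `t` from the row on which a walk arrives
through the extreme cut to the row on which it leaves through it. A walk going right then pays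
`a_c` for the cuts `c ∈ S` and `ε` for the others, plus `2ε` per change of row, hence at most
`∑_{c ∈ S} a_c + O(n) ε`. Reversing every arc and swapping `d j` with `d' j` turns this
orientation into the one built from `Sᶜ`, so walks going left cost at most
`∑_{c ∉ S} a_c + O(n) ε`, which is the same bound; two vertices of one column are joined around a
single cut. All the `ε`-terms add up to at most `(3n + 4) ε ≤ 1 - ε`, since the graph has `6n`
edges.
-/

open Finset

section ReachableWithin

variable {V : Type*}

/-- `ReachableWithin D wt u v b`: some directed walk from `u` to `v` in `D` has weight `≤ b`. -/
inductive ReachableWithin (D : V → V → Prop) (wt : V → V → ℝ) : V → V → ℝ → Prop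
  | nil {u : V} {b : ℝ} : 0 ≤ b → ReachableWithin D wt u u b
  | cons {u x v : V} {b b' : ℝ} :
      D u x → ReachableWithin D wt x v b → wt u x + b ≤ b' → ReachableWithin D wt u v b'

namespace ReachableWithin

variable {D : V → V → Prop} {wt : V → V → ℝ} {u v x : V} {b b' : ℝ}

theorem refl (u : V) : ReachableWithin D wt u u 0 := nil le_rfl

theorem mono (h : ReachableWithin D wt u v b) (hb : b ≤ b') : ReachableWithin D wt u v b' := by
  cases h with
  | nil h0 => exact nil (h0.trans hb)
  | cons hux hx hle => exact cons hux hx (hle.trans hb)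

theorem single (h : D u v) (hb : wt u v ≤ b) : ReachableWithin D wt u v b :=
  cons h (refl v) (by simpa using hb)

theorem trans (h₁ : ReachableWithin D wt u x b) (h₂ : ReachableWithin D wt x v b') :
    ReachableWithin D wt u v (b + b') := by
  induction h₁ with
  | nil h0 => exact h₂.mono (by linarith)
  | cons hux _ hle ih => exact cons hux (ih h₂) (by linarith)

theorem exists_isDiwalk (h : ReachableWithin D wt u v b) :
    ∃ (k : ℕ) (f : Fin (k + 1) → V), IsDiwalk D f u v ∧
      ∑ i : Fin k, wt (f i.castSucc) (f i.succ) ≤ b := by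
  induction h with
  | @nil u b h0 => exact ⟨0, fun _ => u, ⟨rfl, rfl, Fin.elim0⟩, by simpa using h0⟩
  | @cons u x v b b' hux _ hle ih =>
    obtain ⟨k, f, ⟨hf0, hfk, hf⟩, hsum⟩ := ih
    refine ⟨k + 1, Fin.cons u f, ⟨rfl, by simpa [← Fin.succ_last] using hfk, ?_⟩, ?_⟩
    · refine Fin.cases ?_ fun i => ?_
      · simpa [hf0] using hux
      · simpa [← Fin.succ_castSucc] using hf i
    · rw [Fin.sum_univ_succ]
      simpa [hf0, ← Fin.succ_castSucc] using by linarith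

theorem reverse {D' : V → V → Prop} {wt' : V → V → ℝ} {σ : V → V}
    (hD : ∀ x y, D x y → D' (σ y) (σ x)) (hwt : ∀ x y, wt' (σ y) (σ x) = wt x y)
    (h : ReachableWithin D wt u v b) : ReachableWithin D' wt' (σ v) (σ u) b := by
  induction h with
  | nil h0 => exact nil h0
  | @cons u x v b b' hux _ hle ih =>
    exact (ih.trans (single (hD u x hux) (hwt u x).le)).mono (by linarith)

theorem nonneg (hwt : ∀ x y, 0 ≤ wt x y) (h : ReachableWithin D wt u v b) : 0 ≤ b := by
  induction h with
  | nil h0 => exact h0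
  | @cons u x v b b' _ _ hle ih => linarith [hwt u x]

theorem wDirDist_le (hwt : ∀ x y, 0 ≤ wt x y) (h : ReachableWithin D wt u v b) :
    wDirDist D wt u v ≤ b := by
  obtain ⟨k, f, hf, hsum⟩ := h.exists_isDiwalk
  unfold wDirDist
  refine le_trans (csInf_le ⟨0, ?_⟩ ?_) hsum
  · rintro _ ⟨k, f, -, rfl⟩
    exact sum_nonneg fun i _ => hwt _ _
  · exact ⟨k, f, hf, rfl⟩

open Fin.NatCast in
theorem of_cycle {m : ℕ} {ε : ℝ} (hε : 0 ≤ ε) (x : Fin (m + 1) → V)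
    (hD : ∀ i, D (x i) (x (i + 1))) (hwt : ∀ i, wt (x i) (x (i + 1)) ≤ ε)
    (i j : Fin (m + 1)) :
    ReachableWithin D wt (x i) (x j) (m * ε) := by
  have key (k : ℕ) : ReachableWithin D wt (x i) (x (i + (k : Fin (m + 1)))) (k * ε) := by
    induction k with
    | zero => simpa using refl (x i)
    | succ k ih =>
      rw [Nat.cast_succ, ← add_assoc]
      exact (ih.trans (single (hD _) (hwt _))).mono (by push_cast; linarith)
  have h := key (j - i).val
  rw [Fin.cast_val_eq_self, add_sub_cancel] at h
  exact h.mono (mul_le_mul_of_nonneg_right (by exact_mod_cast (j - i).is_le) hε)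

end ReachableWithin

theorem isStrong_of_reachableWithin {D : V → V → Prop} {wt : V → V → ℝ} {b : ℝ}
    (h : ∀ u v, ReachableWithin D wt u v b) : IsStrong D := fun u v => by
  obtain ⟨k, f, hf, -⟩ := (h u v).exists_isDiwalk
  exact ⟨k, f, hf⟩

theorem wDirDiam_le_of_reachableWithin [Nonempty V] {D : V → V → Prop} {wt : V → V → ℝ}
    {b : ℝ} (hwt : ∀ x y, 0 ≤ wt x y) (h : ∀ u v, ReachableWithin D wt u v b) :
    wDirDiam D wt ≤ b := by
  obtain ⟨u⟩ := ‹Nonempty V›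
  refine Real.sSup_le ?_ ((h u u).nonneg hwt)
  rintro _ ⟨u, v, -, rfl⟩
  exact (h u v).wDirDist_le hwt

end ReachableWithin

deriving instance Fintype for GV

namespace GV

variable {n : ℕ}

instance : Nonempty (GV n) := ⟨s⟩

def cell (r : Bool) (c : ℕ) (h : c ≤ n) : GV n :=
  bif r then v ⟨c, Nat.lt_succ_of_le h⟩ else w ⟨c, Nat.lt_succ_of_le h⟩

def colOf : GV n → ℕ
  | v i => i
  | w i => i
  | s => 0
  | t => n
  | d j => j + 1
  | d' j => j + 1

theorem colOf_le (u : GV n) : colOf u ≤ n := by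
  cases u <;> simp only [colOf] <;> omega

def swapMid : GV n → GV n
  | d j => d' j
  | d' j => d j
  | u => u

@[simp] theorem swapMid_swapMid (u : GV n) : swapMid (swapMid u) = u := by
  cases u <;> rfl

@[simp] theorem colOf_swapMid (u : GV n) : colOf (swapMid u) = colOf u := by
  cases u <;> rfl

end GV

open GV

def gridOrient {n : ℕ} (p : ℕ → Bool) : GV n → GV n → Prop
  | v i, v j => ((i : ℕ) + 1 = j ∧ p i) ∨ ((j : ℕ) + 1 = i ∧ !p j)
  | w i, w j => ((i : ℕ) + 1 = j ∧ !p i) ∨ ((j : ℕ) + 1 = i ∧ p j)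
  | v i, d j => i = col j
  | d j, w i => i = col j
  | w i, d' j => i = col j
  | d' j, v i => i = col j
  | s, v i => i = 0 ∧ p 0
  | v i, s => i = 0 ∧ !p 0
  | s, w i => i = 0 ∧ !p 0
  | w i, s => i = 0 ∧ p 0
  | v i, t => i = Fin.last n ∧ p (n - 1)
  | t, v i => i = Fin.last n ∧ !p (n - 1)
  | w i, t => i = Fin.last n ∧ !p (n - 1)
  | t, w i => i = Fin.last n ∧ p (n - 1)
  | _, _ => False

section orientation

variable {n : ℕ} (p : ℕ → Bool)

theorem gridGraph_adj_top {i j : Fin (n + 1)} (h : (i : ℕ) + 1 = j) :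
    (gridGraph n).Adj (v i) (v j) := by
  obtain ⟨c, rfl, rfl⟩ : ∃ c : Fin n, c.castSucc = i ∧ c.succ = j :=
    ⟨⟨i, by omega⟩, rfl, Fin.ext h⟩
  exact ⟨Or.inl ⟨c, rfl⟩, mt v.inj Fin.castSucc_lt_succ.ne⟩

theorem gridGraph_adj_bot {i j : Fin (n + 1)} (h : (i : ℕ) + 1 = j) :
    (gridGraph n).Adj (w i) (w j) := by
  obtain ⟨c, rfl, rfl⟩ : ∃ c : Fin n, c.castSucc = i ∧ c.succ = j :=
    ⟨⟨i, by omega⟩, rfl, Fin.ext h⟩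
  exact ⟨Or.inr (Or.inl ⟨c, rfl⟩), mt w.inj Fin.castSucc_lt_succ.ne⟩

theorem gridOrient_adj {u v : GV n} (h : gridOrient p u v) : (gridGraph n).Adj u v := by
  cases u <;> cases v <;> simp only [gridOrient] at h
  case v.v =>
    rcases h with ⟨h, -⟩ | ⟨h, -⟩
    exacts [gridGraph_adj_top h, (gridGraph_adj_top h).symm]
  case w.w =>
    rcases h with ⟨h, -⟩ | ⟨h, -⟩
    exacts [gridGraph_adj_bot h, (gridGraph_adj_bot h).symm]
  all_goals first | exact h.elim | obtain ⟨rfl, -⟩ := h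
  all_goals simp [gridGraph, gridEdges, Sym2.eq_swap]

theorem gridOrient_iff_not {u v : GV n} (h : (gridGraph n).Adj u v) :
    gridOrient p u v ↔ ¬ gridOrient p v u := by
  obtain ⟨he, -⟩ := h
  rcases he with ⟨i, hi⟩ | ⟨i, hi⟩ | hi | hi | hi | hi | ⟨j, hi | hi | hi | hi⟩ <;>
    rcases Sym2.eq_iff.1 hi with ⟨rfl, rfl⟩ | ⟨rfl, rfl⟩ <;>
    simp [gridOrient, show ∀ k : ℕ, k + 1 + 1 ≠ k by omega]

theorem isOrientation_gridOrient : IsOrientation (gridGraph n) (gridOrient p) :=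
  ⟨fun _ _ => gridOrient_adj p, fun _ _ => gridOrient_iff_not p⟩

theorem gridOrient_swapMid {u v : GV n} :
    gridOrient p (swapMid v) (swapMid u) ↔ gridOrient (fun c => !p c) u v := by
  cases u <;> cases v <;> simp [gridOrient, swapMid] <;> tauto

end orientation

theorem gridWt_swapMid {n : ℕ} (a : Fin n → ℕ) (ε : ℝ) (u v : GV n) :
    gridWt n a ε (swapMid v) (swapMid u) = gridWt n a ε u v := by
  cases u <;> cases v <;> simp [gridWt, swapMid, min_comm]

section edgeCount

variable {n : ℕ}

def gridEdgeEnum :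
    (Fin n × Bool) ⊕ (Fin (n - 1) × Bool × Bool) ⊕ (Bool × Bool) → Sym2 (GV n)
  | .inl (i, r) => bif r then s(v i.castSucc, v i.succ) else s(w i.castSucc, w i.succ)
  | .inr (.inl (j, m, r)) => s(bif m then d j else d' j, bif r then v (col j) else w (col j))
  | .inr (.inr (e, r)) =>
      s(bif e then s else t, bif r then v (bif e then 0 else Fin.last n)
        else w (bif e then 0 else Fin.last n))

theorem gridEdgeEnum_injective : Function.Injective (gridEdgeEnum (n := n)) := by
  rintro (⟨i, _ | _⟩ | ⟨j, _ | _, _ | _⟩ | ⟨_ | _, _ | _⟩)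
    (⟨i', _ | _⟩ | ⟨j', _ | _, _ | _⟩ | ⟨_ | _, _ | _⟩) h <;>
    simp [gridEdgeEnum] at h ⊢ <;> simp_all [Fin.ext_iff, col] <;> omega

theorem gridEdgeEnum_mem_edgeSet (x) : gridEdgeEnum x ∈ (gridGraph n).edgeSet := by
  rcases x with ⟨i, _ | _⟩ | ⟨j, _ | _, _ | _⟩ | ⟨_ | _, _ | _⟩ <;>
    simp [gridEdgeEnum, gridGraph, gridEdges, Fin.castSucc_lt_succ.ne]

theorem le_ncard_edgeSet_gridGraph : 2 * n + 4 * (n - 1) + 4 ≤ (gridGraph n).edgeSet.ncard := by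
  calc 2 * n + 4 * (n - 1) + 4 = Nat.card (Set.range (gridEdgeEnum (n := n))) := by
        rw [Nat.card_range_of_injective gridEdgeEnum_injective]
        simp only [Nat.card_eq_fintype_card, Fintype.card_sum, Fintype.card_prod,
          Fintype.card_fin, Fintype.card_bool]
        ring
    _ ≤ _ := Set.ncard_le_ncard (Set.range_subset_iff.2 gridEdgeEnum_mem_edgeSet)
      (Set.toFinite _)

end edgeCount

section routing

variable {n : ℕ} {p : ℕ → Bool} {a : Fin n → ℕ} {ε : ℝ}

def topWt (a : Fin n → ℕ) (c : ℕ) : ℝ := if h : c < n then a ⟨c, h⟩ else 0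

/-- The cost of crossing cut `c` rightwards in `gridOrient p`: along the top edge iff `p c`. -/
def crossCost (p : ℕ → Bool) (a : Fin n → ℕ) (ε : ℝ) (c : ℕ) : ℝ :=
  if p c then topWt a c else ε

def sideSum (p : ℕ → Bool) (a : Fin n → ℕ) : ℝ :=
  ∑ c ∈ range n, if p c then topWt a c else 0

@[simp] theorem colOf_cell (r : Bool) (c : ℕ) (h : c ≤ n) : colOf (cell r c h) = c := by
  cases r <;> rfl

/-- The column-`c` end of the edge of cut `c` that points right in `gridOrient p`. -/
abbrev departure (p : ℕ → Bool) {c : ℕ} (hc : c < n) : GV n := cell (p c) c hc.le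

/-- The column-`(k + 1)` end of the edge of cut `k` that points right in `gridOrient p`. -/
abbrev arrival (p : ℕ → Bool) {k : ℕ} (hk : k < n) : GV n := cell (p k) (k + 1) hk

local notation "Reach" => ReachableWithin (gridOrient p) (gridWt n a ε)

theorem reach_cross {c : ℕ} (hc : c < n) :
    Reach (departure p hc) (arrival p hc) (crossCost p a ε c) := by
  unfold crossCost departure arrival
  cases hp : p c
  · exact .single (by simp [gridOrient, cell, hp]) (by simp [gridWt, cell])
  · exact .single (by simp [gridOrient, cell, hp]) (by simp [gridWt, cell, topWt, hc])

theorem reach_cell_d (j : Fin (n - 1)) : Reach (cell true (col j) (col j).is_le) (d j) ε :=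
  .single rfl le_rfl

theorem reach_d_cell (j : Fin (n - 1)) : Reach (d j) (cell false (col j) (col j).is_le) ε :=
  .single rfl le_rfl

theorem reach_cell_d' (j : Fin (n - 1)) : Reach (cell false (col j) (col j).is_le) (d' j) ε :=
  .single rfl le_rfl

theorem reach_d'_cell (j : Fin (n - 1)) : Reach (d' j) (cell true (col j) (col j).is_le) ε :=
  .single rfl le_rfl

theorem reach_s_cell : Reach s (cell (p 0) 0 n.zero_le) ε := by
  cases hp : p 0 <;> exact .single (by simp [gridOrient, cell, hp]) le_rfl

theorem reach_cell_s : Reach (cell (!p 0) 0 n.zero_le) s ε := by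
  cases hp : p 0 <;> exact .single (by simp [gridOrient, cell, hp]) le_rfl

theorem reach_cell_t {k : ℕ} (hk : k + 1 = n) : Reach (cell (p k) (k + 1) hk.le) t ε := by
  have hlast : (⟨k + 1, by omega⟩ : Fin (n + 1)) = Fin.last n := Fin.ext hk
  cases hp : p k <;>
    exact .single (by simp [gridOrient, cell, hp, hlast, show n - 1 = k by omega]) le_rfl

theorem reach_t_cell {k : ℕ} (hk : k + 1 = n) : Reach t (cell (!p k) (k + 1) hk.le) ε := by
  have hlast : (⟨k + 1, by omega⟩ : Fin (n + 1)) = Fin.last n := Fin.ext hk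
  cases hp : p k <;>
    exact .single (by simp [gridOrient, cell, hp, hlast, show n - 1 = k by omega]) le_rfl

theorem reach_switch_mid (j : Fin (n - 1)) (r : Bool) :
    Reach (cell r (col j) (col j).is_le) (cell (!r) (col j) (col j).is_le) (2 * ε) := by
  cases r
  · exact ((reach_cell_d' j).trans (reach_d'_cell j)).mono (by linarith)
  · exact ((reach_cell_d j).trans (reach_d_cell j)).mono (by linarith)

theorem reach_departure_of_cell (hε : 0 ≤ ε) {c : ℕ} (hc : c < n) (r : Bool) :
    Reach (cell r c hc.le) (departure p hc) (2 * ε) := by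
  rcases Bool.eq_or_eq_not r (p c) with rfl | rfl
  · exact (ReachableWithin.refl _).mono (by linarith)
  rcases c with _ | c
  · exact (reach_cell_s.trans reach_s_cell).mono (by linarith)
  · have h := reach_switch_mid (p := p) (a := a) (ε := ε) ⟨c, by omega⟩ (!p (c + 1))
    rwa [Bool.not_not] at h

theorem reach_cell_of_arrival (hε : 0 ≤ ε) {k : ℕ} (hk : k < n) (r : Bool) :
    Reach (arrival p hk) (cell r (k + 1) hk) (2 * ε) := by
  rcases Bool.eq_or_eq_not r (p k) with rfl | rfl
  · exact (ReachableWithin.refl _).mono (by linarith)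
  rcases (Nat.succ_le_of_lt hk).lt_or_eq with hk' | hk'
  · exact reach_switch_mid (n := n) ⟨k, by omega⟩ (p k)
  · exact ((reach_cell_t hk').trans (reach_t_cell hk')).mono (by linarith)

theorem reach_departure (hε : 0 ≤ ε) {u : GV n} {c : ℕ} (hu : colOf u = c) (hc : c < n) :
    Reach u (departure p hc) (3 * ε) := by
  cases u with
  | v i => subst hu; exact (reach_departure_of_cell hε hc true).mono (by linarith)
  | w i => subst hu; exact (reach_departure_of_cell hε hc false).mono (by linarith)
  | s => obtain rfl : c = 0 := hu.symm; exact reach_s_cell.mono (by linarith)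
  | t => exact absurd hc (by simp [← hu, colOf])
  | d j =>
    subst hu
    exact ((reach_d_cell j).trans (reach_departure_of_cell hε hc false)).mono (by linarith)
  | d' j =>
    subst hu
    exact ((reach_d'_cell j).trans (reach_departure_of_cell hε hc true)).mono (by linarith)

theorem reach_of_arrival (hε : 0 ≤ ε) {v : GV n} {k : ℕ} (hv : colOf v = k + 1) (hk : k < n) :
    Reach (arrival p hk) v (3 * ε) := by
  cases v with
  | v i =>
    obtain ⟨i, hi⟩ := i
    obtain rfl : i = k + 1 := hv
    exact (reach_cell_of_arrival hε hk true).mono (by linarith)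
  | w i =>
    obtain ⟨i, hi⟩ := i
    obtain rfl : i = k + 1 := hv
    exact (reach_cell_of_arrival hε hk false).mono (by linarith)
  | s => exact absurd hv (by simp [colOf])
  | t => exact (reach_cell_t hv.symm).mono (by linarith)
  | d j =>
    obtain ⟨j, hj⟩ := j
    obtain rfl : j = k := by simpa [colOf] using hv
    exact ((reach_cell_of_arrival hε hk true).trans (reach_cell_d ⟨j, hj⟩)).mono (by linarith)
  | d' j =>
    obtain ⟨j, hj⟩ := j
    obtain rfl : j = k := by simpa [colOf] using hv
    exact ((reach_cell_of_arrival hε hk false).trans (reach_cell_d' ⟨j, hj⟩)).mono (by linarith)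

theorem reach_sweep (hε : 0 ≤ ε) {i j : ℕ} (hij : i ≤ j) (hj : j < n) :
    Reach (departure p (hij.trans_lt hj)) (arrival p hj)
      (∑ c ∈ Ico i (j + 1), crossCost p a ε c + 2 * (j - i) * ε) := by
  induction j, hij using Nat.le_induction with
  | base => simpa using reach_cross (p := p) (a := a) (ε := ε) hj
  | succ j hij ih =>
    have h := ((ih (by omega)).trans (reach_departure_of_cell hε hj (p j))).trans (reach_cross hj)
    refine h.mono (le_of_eq ?_)
    rw [sum_Ico_succ_top (by omega : i ≤ j + 1)]
    push_cast
    ring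

theorem reach_of_colOf_lt (hε : 0 ≤ ε) {u v : GV n} (h : colOf u < colOf v) :
    Reach u v (∑ c ∈ Ico (colOf u) (colOf v), crossCost p a ε c +
      (2 * ((colOf v : ℝ) - colOf u) + 4) * ε) := by
  obtain ⟨k, hk⟩ : ∃ k, colOf v = k + 1 := ⟨colOf v - 1, by omega⟩
  have hkn : k < n := by have := colOf_le v; omega
  have h₁ := reach_departure (p := p) (a := a) hε rfl (by omega : colOf u < n)
  have h₂ := reach_sweep (p := p) (a := a) hε (by omega : colOf u ≤ k) hkn
  have h₃ := reach_of_arrival (p := p) (a := a) hε hk hkn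
  refine ((h₁.trans h₂).trans h₃).mono (le_of_eq ?_)
  rw [hk]
  push_cast
  ring

theorem reach_of_colOf_gt (hε : 0 ≤ ε) {u v : GV n} (h : colOf v < colOf u) :
    Reach u v (∑ c ∈ Ico (colOf v) (colOf u), crossCost (fun c => !p c) a ε c +
      (2 * ((colOf u : ℝ) - colOf v) + 4) * ε) := by
  have h' := reach_of_colOf_lt (p := fun c => !p c) (a := a) hε
    (u := swapMid v) (v := swapMid u) (by simpa using h)
  simpa using h'.reverse (fun x y => (gridOrient_swapMid p (u := x) (v := y)).2)
    (gridWt_swapMid a ε)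

theorem crossCost_add_crossCost_not (c : ℕ) :
    crossCost p a ε c + crossCost (fun c => !p c) a ε c = topWt a c + ε := by
  unfold crossCost
  cases hp : p c <;> simp [hp, add_comm]

/-- Two vertices of one column are joined by a walk that goes once around an adjacent cut. -/
theorem reach_of_colOf_eq (hε : 0 ≤ ε) (hn : 0 < n) {u v : GV n} (h : colOf u = colOf v) :
    ∃ c < n, Reach u v (topWt a c + 10 * ε) := by
  by_cases hc : colOf u < n
  · refine ⟨colOf u, hc, ?_⟩
    have h₁ := reach_departure (p := p) (a := a) hε rfl hc
    have h₂ := reach_cross (p := p) (a := a) (ε := ε) hc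
    have h₃ := reach_of_colOf_gt (p := p) (a := a) hε
      (u := arrival p hc) (v := v) (by rw [colOf_cell]; omega)
    refine ((h₁.trans h₂).trans h₃).mono (le_of_eq ?_)
    rw [colOf_cell, ← h, Nat.Ico_succ_singleton, sum_singleton]
    push_cast
    linear_combination crossCost_add_crossCost_not (p := p) (a := a) (ε := ε) (colOf u)
  · obtain ⟨k, hk⟩ : ∃ k, n = k + 1 := ⟨n - 1, by omega⟩
    have hu : colOf u = k + 1 := by have := colOf_le u; omega
    refine ⟨k, by omega, ?_⟩
    have h₁ := reach_of_colOf_gt (p := p) (a := a) hε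
      (u := u) (v := departure p (by omega : k < n)) (by rw [colOf_cell]; omega)
    have h₂ := reach_cross (p := p) (a := a) (ε := ε) (by omega : k < n)
    have h₃ := reach_of_arrival (p := p) (a := a) hε (h ▸ hu) (by omega)
    refine ((h₁.trans h₂).trans h₃).mono (le_of_eq ?_)
    rw [colOf_cell, hu, Nat.Ico_succ_singleton, sum_singleton]
    push_cast
    linear_combination crossCost_add_crossCost_not (p := p) (a := a) (ε := ε) k

theorem topWt_nonneg (a : Fin n → ℕ) (c : ℕ) : 0 ≤ topWt a c := by
  unfold topWt
  split_ifs <;> positivity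

theorem topWt_le_sideSum {c : ℕ} (hc : c < n) (hp : p c) : topWt a c ≤ sideSum p a := by
  have h := single_le_sum (f := fun c => if p c then topWt a c else 0)
    (fun c _ => by split_ifs <;> simp [topWt_nonneg]) (mem_range.2 hc)
  simpa [sideSum, hp] using h

theorem sum_crossCost_le (hε : 0 ≤ ε) {i k : ℕ} (hk : k ≤ n) :
    ∑ c ∈ Ico i k, crossCost p a ε c ≤ sideSum p a + n * ε := by
  have hsub : Ico i k ⊆ range n := fun c hc => mem_range.2 ((mem_Ico.1 hc).2.trans_le hk)
  calc ∑ c ∈ Ico i k, crossCost p a ε c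
      ≤ ∑ c ∈ Ico i k, ((if p c then topWt a c else 0) + ε) :=
        sum_le_sum fun c _ => by unfold crossCost; split_ifs <;> simp [hε]
    _ = ∑ c ∈ Ico i k, (if p c then topWt a c else 0) + (k - i : ℕ) * ε := by
        rw [sum_add_distrib, sum_const, Nat.card_Ico, nsmul_eq_mul]
    _ ≤ sideSum p a + n * ε := by
        gcongr
        · exact sum_le_sum_of_subset_of_nonneg hsub fun c _ _ => by
            split_ifs <;> simp [topWt_nonneg]
        · omega

theorem reach_gridOrient (hε : 0 ≤ ε) (hn : 2 ≤ n)
    (hp : sideSum (fun c => !p c) a = sideSum p a) (u v : GV n) :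
    Reach u v (sideSum p a + (3 * n + 4) * ε) := by
  have hu : (colOf u : ℝ) ≤ n := by exact_mod_cast colOf_le u
  have hv : (colOf v : ℝ) ≤ n := by exact_mod_cast colOf_le v
  have hn' : (2 : ℝ) ≤ n := by exact_mod_cast hn
  rcases lt_trichotomy (colOf u) (colOf v) with h | h | h
  · have hsum := sum_crossCost_le (p := p) (a := a) hε (i := colOf u) (colOf_le v)
    have hlen : (2 * ((colOf v : ℝ) - colOf u) + 4) * ε ≤ (2 * n + 4) * ε :=
      mul_le_mul_of_nonneg_right (by linarith [(colOf u).cast_nonneg (α := ℝ)]) hε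
    exact (reach_of_colOf_lt hε h).mono (by linarith)
  · obtain ⟨c, hc, hr⟩ := reach_of_colOf_eq (p := p) (a := a) hε (by omega) h
    have htop : topWt a c ≤ sideSum p a := by
      cases hpc : p c
      · exact hp ▸ topWt_le_sideSum hc (by simp [hpc])
      · exact topWt_le_sideSum hc hpc
    have hlen : 10 * ε ≤ (3 * n + 4) * ε := mul_le_mul_of_nonneg_right (by linarith) hε
    exact hr.mono (by linarith)
  · have hsum := sum_crossCost_le (p := fun c => !p c) (a := a) hε (i := colOf v) (colOf_le u)
    have hlen : (2 * ((colOf u : ℝ) - colOf v) + 4) * ε ≤ (2 * n + 4) * ε :=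
      mul_le_mul_of_nonneg_right (by linarith [(colOf v).cast_nonneg (α := ℝ)]) hε
    exact (reach_of_colOf_gt hε h).mono (by linarith)

end routing

theorem reach_gridOrient_zero (p : ℕ → Bool) (a : Fin 0 → ℕ) {ε : ℝ} (hε : 0 ≤ ε)
    (u v : GV 0) :
    ReachableWithin (gridOrient p) (gridWt 0 a ε) u v (3 * ε) := by
  let x : Fin 4 → GV 0 := ![s, cell (p 0) 0 le_rfl, t, cell (!p 0) 0 le_rfl]
  have hx (u : GV 0) : ∃ i, x i = u := by
    cases u with
    | v i =>
      obtain rfl : i = 0 := Fin.ext (by omega)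
      cases hp : p 0 <;> simp [x, cell, hp, Fin.exists_fin_succ]
    | w i =>
      obtain rfl : i = 0 := Fin.ext (by omega)
      cases hp : p 0 <;> simp [x, cell, hp, Fin.exists_fin_succ]
    | s => exact ⟨0, rfl⟩
    | t => exact ⟨2, rfl⟩
    | d j => exact j.elim0
    | d' j => exact j.elim0
  have hD (i : Fin 4) : gridOrient p (x i) (x (i + 1)) := by
    fin_cases i <;> cases hp : p 0 <;> simp [x, gridOrient, cell, hp]
  have hwt (i : Fin 4) : gridWt 0 a ε (x i) (x (i + 1)) ≤ ε := by
    fin_cases i <;> cases hp : p 0 <;> simp [x, gridWt, cell, hp]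
  obtain ⟨i, rfl⟩ := hx u
  obtain ⟨j, rfl⟩ := hx v
  exact_mod_cast ReachableWithin.of_cycle hε x hD hwt i j

theorem gridWt_nonneg {n : ℕ} (a : Fin n → ℕ) {ε : ℝ} (hε : 0 ≤ ε) (u v : GV n) :
    0 ≤ gridWt n a ε u v := by
  cases u <;> cases v <;> simp only [gridWt] <;> (try split_ifs) <;> simp [hε]

theorem sideSum_eq_sum {n : ℕ} (q : ℕ → Bool) (a : Fin n → ℕ) :
    sideSum q a = ∑ i : Fin n, if q i then (a i : ℝ) else 0 := by
  rw [sideSum, ← Fin.sum_univ_eq_sum_range]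
  simp [topWt]

def cutSide {n : ℕ} (S : Finset (Fin n)) (c : ℕ) : Bool :=
  decide (∃ h : c < n, ⟨c, h⟩ ∈ S)

theorem sideSum_cutSide {n : ℕ} (S : Finset (Fin n)) (a : Fin n → ℕ) :
    sideSum (cutSide S) a = ∑ i ∈ S, (a i : ℝ) := by
  simp [sideSum_eq_sum, cutSide, sum_ite_mem]

theorem sideSum_not_cutSide {n : ℕ} (S : Finset (Fin n)) (a : Fin n → ℕ) :
    sideSum (fun c => !cutSide S c) a = ∑ i ∈ Sᶜ, (a i : ℝ) := by
  simp [sideSum_eq_sum, cutSide, sum_ite, filter_notMem_eq_sdiff, compl_eq_univ_sdiff]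

theorem two_le_of_sum_eq_sum_compl {n : ℕ} {a : Fin n → ℕ} (ha : ∀ i, 0 < a i)
    {S : Finset (Fin n)} (hS : ∑ i ∈ S, a i = ∑ i ∈ Sᶜ, a i) (hn : n ≠ 0) : 2 ≤ n := by
  by_contra! h
  obtain rfl : n = 1 := by omega
  rcases S.eq_empty_or_nonempty with rfl | ⟨i, hi⟩
  · exact (ha 0).ne' (by simpa using hS.symm)
  · obtain rfl : S = univ := eq_univ_of_forall fun j => Subsingleton.elim i j ▸ hi
    rw [compl_univ, sum_empty] at hS
    exact (ha 0).ne' (by simpa using hS)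

theorem reach_gridOrient_cutSide {n : ℕ} {a : Fin n → ℕ} (ha : ∀ i, 0 < a i)
    {S : Finset (Fin n)} (hS : ∑ i ∈ S, a i = ∑ i ∈ Sᶜ, a i) (u v : GV n) :
    ReachableWithin (gridOrient (cutSide S)) (gridWt n a (1 / (gridGraph n).edgeSet.ncard)) u v
      (1 + (∑ i, (a i : ℝ)) / 2 - 1 / (gridGraph n).edgeSet.ncard) := by
  set m := (gridGraph n).edgeSet.ncard
  have hm := le_ncard_edgeSet_gridGraph (n := n)
  have hε : 0 ≤ 1 / (m : ℝ) := by positivity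
  have hεm (k : ℕ) (hk : k ≤ m) : (k : ℝ) * (1 / m) ≤ 1 := by
    rw [mul_one_div]
    exact div_le_one_of_le₀ (by exact_mod_cast hk) (by positivity)
  rcases eq_or_ne n 0 with rfl | hn
  · refine (reach_gridOrient_zero _ a hε u v).mono ?_
    have := hεm 4 (by omega)
    simp only [univ_eq_empty, sum_empty]
    linarith
  have hside : sideSum (fun c => !cutSide S c) a = sideSum (cutSide S) a := by
    rw [sideSum_cutSide, sideSum_not_cutSide]
    exact_mod_cast hS.symm
  have hhalf : ∑ i ∈ S, (a i : ℝ) = (∑ i, (a i : ℝ)) / 2 := by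
    rw [← sum_add_sum_compl S, ← Nat.cast_sum, ← Nat.cast_sum, ← hS]
    ring
  have h2 := two_le_of_sum_eq_sum_compl ha hS hn
  refine (reach_gridOrient hε h2 hside u v).mono ?_
  have := hεm (3 * n + 5) (by omega)
  rw [sideSum_cutSide, hhalf]
  push_cast at this
  linarith

/-- If the positive integers `a₁,…,aₙ` can be partitioned into two subsets of equal sums,
then the weighted gadget graph `G(a₁,…,aₙ)` (all non-top edges weighted `ε = 1/m`, `m` the
number of edges) admits a strong orientation of weighted diameter at most
`D = 1 + (Σ aᵢ)/2 - ε`. -/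
theorem gridGraph_partition_imp_orientation (n : ℕ) (a : Fin n → ℕ) (ha : ∀ i, 0 < a i)
    (hpart : ∃ S : Finset (Fin n), ∑ i ∈ S, a i = ∑ i ∈ Sᶜ, a i) :
    ∃ D : GV n → GV n → Prop, IsOrientation (gridGraph n) D ∧ IsStrong D ∧
      wDirDiam D (gridWt n a (1 / ((gridGraph n).edgeSet.ncard : ℝ))) ≤
        1 + (∑ i : Fin n, (a i : ℝ)) / 2 - 1 / ((gridGraph n).edgeSet.ncard : ℝ) := by
  obtain ⟨S, hS⟩ := hpart
  have key := reach_gridOrient_cutSide ha hS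
  exact ⟨gridOrient (cutSide S), isOrientation_gridOrient _, isStrong_of_reachableWithin key,
    wDirDiam_le_of_reachableWithin (gridWt_nonneg a (by positivity)) key⟩
end
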